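/- Recursion for the full alphabet as target: f_{k+1,r}^{R} = min { f_{k,r}^{A_{r-1}}, 2·f_{k,r}^{R} }, where A_{r-1} is any (r−1)-element subset of R containing a. -/
import Mathlib

open Finset

/-- Fitch's parsimony operation: intersection if nonempty, otherwise union. -/
def fitchOp {α : Type*} [DecidableEq α] (B C : Finset α) : Finset α :=
  if (B ∩ C).Nonempty then B ∩ C else B ∪ C

/-- `fCS a R k A` is `f_{k,r}^A`: the minimum number of leaves of the fully
bifurcating tree `T_k` that must be assigned state `a` in order for the Fitch
root state set to equal `A`, defined by the standard-decomposition recursion,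
with base case `f_{0,r}^{{x}} = 1` if `x = a` and `0` otherwise. -/
noncomputable def fCS {α : Type*} [DecidableEq α] (a : α) (R : Finset α) :
    ℕ → Finset α → ℕ
  | 0, A => if a ∈ A then 1 else 0
  | (k+1), A => sInf {n : ℕ | ∃ B C : Finset α, B ⊆ R ∧ C ⊆ R ∧
      B.Nonempty ∧ C.Nonempty ∧ B.card ≤ 2 ^ k ∧ C.card ≤ 2 ^ k ∧
      fitchOp B C = A ∧ n = fCS a R k B + fCS a R k C}

section Aux
variable {α : Type*} [DecidableEq α]

lemma fCS_zero (a : α) (R A : Finset α) : fCS a R 0 A = if a ∈ A then 1 else 0 := rfl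

lemma fCS_succ (a : α) (R : Finset α) (k : ℕ) (A : Finset α) :
    fCS a R (k+1) A = sInf {n : ℕ | ∃ B C : Finset α, B ⊆ R ∧ C ⊆ R ∧
      B.Nonempty ∧ C.Nonempty ∧ B.card ≤ 2 ^ k ∧ C.card ≤ 2 ^ k ∧
      fitchOp B C = A ∧ n = fCS a R k B + fCS a R k C} := rfl

lemma fitchOp_inter (B C : Finset α) (h : (B ∩ C).Nonempty) : fitchOp B C = B ∩ C :=
  if_pos h

lemma fitchOp_union (B C : Finset α) (h : B ∩ C = ∅) : fitchOp B C = B ∪ C := by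
  rw [fitchOp, if_neg]; simp [h]

lemma fitchOp_self (B : Finset α) (h : B.Nonempty) : fitchOp B B = B := by
  rw [fitchOp_inter B B (by simpa using h), inter_self]

/-- f is 0 on sets not containing a. -/
lemma fCS_of_notMem (a : α) (R : Finset α) :
    ∀ (k : ℕ) (A : Finset α), a ∉ A → A.Nonempty → A ⊆ R → A.card ≤ 2 ^ k →
    fCS a R k A = 0 := by
  intro k
  induction k with
  | zero => intro A ha _ _ _; simp [fCS_zero, ha]
  | succ k ih =>
    intro A ha hne hAR hcard
    rw [fCS_succ]
    apply Nat.sInf_eq_zero.mpr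
    left
    by_cases h : A.card ≤ 2 ^ k
    · exact ⟨A, A, hAR, hAR, hne, hne, h, h, fitchOp_self A hne,
        by rw [ih A ha hne hAR h]⟩
    · push_neg at h
      obtain ⟨B, hBA, hBcard⟩ := A.exists_subset_card_eq (n := 2 ^ k) h.le
      have hBne : B.Nonempty := card_pos.mp (by rw [hBcard]; positivity)
      have hCcard : (A \ B).card = A.card - 2 ^ k := by
        rw [card_sdiff_of_subset hBA, hBcard]
      have hCne : (A \ B).Nonempty := card_pos.mp (by omega)
      have haB : a ∉ B := fun hx => ha (hBA hx)
      have haC : a ∉ A \ B := fun hx => ha (mem_sdiff.mp hx).1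
      refine ⟨B, A \ B, hBA.trans hAR, sdiff_subset.trans hAR, hBne, hCne,
        hBcard.le, by rw [pow_succ] at hcard; omega, ?_, ?_⟩
      · rw [fitchOp_union B (A \ B) (inter_sdiff_self B A), union_sdiff_of_subset hBA]
      · rw [ih B haB hBne (hBA.trans hAR) hBcard.le,
          ih (A \ B) haC hCne (sdiff_subset.trans hAR) (by omega)]

/-- The decomposition set is nonempty. -/
lemma S_nonempty (a : α) (R : Finset α) (k : ℕ) (A : Finset α) (hne : A.Nonempty)
    (hAR : A ⊆ R) (hcard : A.card ≤ 2 ^ (k+1)) :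
    {n : ℕ | ∃ B C : Finset α, B ⊆ R ∧ C ⊆ R ∧
      B.Nonempty ∧ C.Nonempty ∧ B.card ≤ 2 ^ k ∧ C.card ≤ 2 ^ k ∧
      fitchOp B C = A ∧ n = fCS a R k B + fCS a R k C}.Nonempty := by
  by_cases h : A.card ≤ 2 ^ k
  · exact ⟨_, A, A, hAR, hAR, hne, hne, h, h, fitchOp_self A hne, rfl⟩
  · push_neg at h
    obtain ⟨B, hBA, hBcard⟩ := A.exists_subset_card_eq (n := 2 ^ k) h.le
    have hBne : B.Nonempty := card_pos.mp (by rw [hBcard]; positivity)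
    have hCcard : (A \ B).card = A.card - 2 ^ k := by rw [card_sdiff_of_subset hBA, hBcard]
    have hCne : (A \ B).Nonempty := card_pos.mp (by omega)
    refine ⟨_, B, A \ B, hBA.trans hAR, sdiff_subset.trans hAR, hBne, hCne,
      hBcard.le, by rw [pow_succ] at hcard; omega, ?_, rfl⟩
    rw [fitchOp_union B (A \ B) (inter_sdiff_self B A), union_sdiff_of_subset hBA]

/-- Symmetry: f depends only on the cardinality (for sets containing a). -/
lemma fCS_sym (a : α) (R : Finset α) :
    ∀ (k : ℕ) (A A' : Finset α), a ∈ A → A ⊆ R → a ∈ A' → A' ⊆ R →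
    A.card = A'.card → A.card ≤ 2 ^ k → fCS a R k A' ≤ fCS a R k A := by
  intro k
  induction k with
  | zero => intro A A' h1 _ h2 _ _ _; simp [fCS_zero, h1, h2]
  | succ k ih =>
    intro A A' haA hAR haA' hA'R hAA' hAcard
    rw [fCS_succ a R k A, fCS_succ a R k A']
    obtain ⟨B, C, hBR, hCR, hBne, hCne, hBc, hCc, hop, hval⟩ :=
      Nat.sInf_mem (S_nonempty a R k A ⟨a, haA⟩ hAR hAcard)
    rw [hval]
    by_cases hint : (B ∩ C).Nonempty
    · -- intersection case : B ∩ C = A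
      rw [fitchOp_inter B C hint] at hop
      have hAB : A ⊆ B := by rw [← hop]; exact inter_subset_left
      have hAC : A ⊆ C := by rw [← hop]; exact inter_subset_right
      have hdisjBC : Disjoint (B \ A) (C \ A) := by
        rw [disjoint_left]
        intro x hxB hxC
        rw [mem_sdiff] at hxB hxC
        exact hxB.2 (by rw [← hop]; exact mem_inter.mpr ⟨hxB.1, hxC.1⟩)
      have hsum : (B \ A).card + (C \ A).card ≤ (R \ A).card := by
        rw [← card_union_of_disjoint hdisjBC]
        exact card_le_card (union_subset (sdiff_subset_sdiff hBR le_rfl)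
          (sdiff_subset_sdiff hCR le_rfl))
      have hRA : (R \ A).card = R.card - A.card := card_sdiff_of_subset hAR
      have hRA' : (R \ A').card = R.card - A.card := by rw [card_sdiff_of_subset hA'R, hAA']
      have hB1card : B.card - A.card ≤ (R \ A').card := by
        rw [hRA']; have := card_sdiff_of_subset hAB; omega
      obtain ⟨B₁, hB₁sub, hB₁card⟩ := (R \ A').exists_subset_card_eq hB1card
      have hC1card : C.card - A.card ≤ ((R \ A') \ B₁).card := by
        rw [card_sdiff_of_subset hB₁sub, hB₁card, hRA']
        have h1 := card_sdiff_of_subset hAB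
        have h2 := card_sdiff_of_subset hAC
        omega
      obtain ⟨C₁, hC₁sub, hC₁card⟩ := ((R \ A') \ B₁).exists_subset_card_eq hC1card
      set B' := A' ∪ B₁ with hB'def
      set C' := A' ∪ C₁ with hC'def
      have hdB : Disjoint A' B₁ := disjoint_of_subset_right hB₁sub sdiff_disjoint.symm
      have hdC : Disjoint A' C₁ := disjoint_of_subset_right
        (hC₁sub.trans sdiff_subset) sdiff_disjoint.symm
      have hB'card : B'.card = B.card := by
        rw [hB'def, card_union_of_disjoint hdB, hB₁card, ← hAA']
        have := card_le_card hAB; omega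
      have hC'card : C'.card = C.card := by
        rw [hC'def, card_union_of_disjoint hdC, hC₁card, ← hAA']
        have := card_le_card hAC; omega
      have hBC' : B' ∩ C' = A' := by
        ext x
        simp only [hB'def, hC'def, mem_inter, mem_union]
        constructor
        · rintro ⟨hb, hc⟩
          rcases hb with hb | hb
          · exact hb
          rcases hc with hc | hc
          · exact hc
          exact absurd (hC₁sub hc) (by simp [hB₁sub, hb])
        · intro h; exact ⟨Or.inl h, Or.inl h⟩
      have hB'R : B' ⊆ R := union_subset hA'R (hB₁sub.trans sdiff_subset)
      have hC'R : C' ⊆ R := union_subset hA'R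
        ((hC₁sub.trans sdiff_subset).trans sdiff_subset)
      refine le_trans (Nat.sInf_le ⟨B', C', hB'R, hC'R, ⟨a, mem_union_left _ haA'⟩,
        ⟨a, mem_union_left _ haA'⟩, by omega, by omega, ?_, rfl⟩) ?_
      · rw [fitchOp_inter B' C' (by rw [hBC']; exact ⟨a, haA'⟩), hBC']
      · exact add_le_add
          (ih B B' (hAB haA) hBR (mem_union_left _ haA') hB'R hB'card.symm hBc)
          (ih C C' (hAC haA) hCR (mem_union_left _ haA') hC'R hC'card.symm hCc)
    · -- union case : B ∪ C = A, B ∩ C = ∅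
      have hdisj : B ∩ C = ∅ := not_nonempty_iff_eq_empty.mp hint
      rw [fitchOp_union B C hdisj] at hop
      have key : ∀ B C : Finset α, B ⊆ R → C ⊆ R → B.Nonempty → C.Nonempty →
          B.card ≤ 2 ^ k → C.card ≤ 2 ^ k → B ∩ C = ∅ → B ∪ C = A → a ∈ B →
          sInf {n : ℕ | ∃ B C : Finset α, B ⊆ R ∧ C ⊆ R ∧
            B.Nonempty ∧ C.Nonempty ∧ B.card ≤ 2 ^ k ∧ C.card ≤ 2 ^ k ∧
            fitchOp B C = A' ∧ n = fCS a R k B + fCS a R k C} ≤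
            fCS a R k B + fCS a R k C := by
        intro B C hBR hCR hBne hCne hBc hCc hdisj hop haB
        have haC : a ∉ C := fun hx => by
          have : a ∈ B ∩ C := mem_inter.mpr ⟨haB, hx⟩
          simp [hdisj] at this
        have hcardA : A.card = B.card + C.card := by
          rw [← hop, card_union_of_disjoint (disjoint_iff_inter_eq_empty.mpr hdisj)]
        have hCpos : 1 ≤ C.card := card_pos.mpr hCne
        have hBpos : 1 ≤ B.card := card_pos.mpr hBne
        have hB''le : B.card - 1 ≤ (A'.erase a).card := by
          rw [card_erase_of_mem haA']; omega
        obtain ⟨B'', hB''sub, hB''card⟩ := (A'.erase a).exists_subset_card_eq hB''le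
        have haB'' : a ∉ B'' := fun hx => (mem_erase.mp (hB''sub hx)).1 rfl
        set B' := insert a B'' with hB'def
        have hB'card : B'.card = B.card := by
          rw [hB'def, card_insert_of_notMem haB'', hB''card]; omega
        have hB'A' : B' ⊆ A' := insert_subset haA' (hB''sub.trans (erase_subset _ _))
        set C' := A' \ B' with hC'def
        have hC'card : C'.card = C.card := by
          rw [hC'def, card_sdiff_of_subset hB'A', hB'card, ← hAA']; omega
        have hC'ne : C'.Nonempty := card_pos.mp (by omega)
        have haC' : a ∉ C' := fun hx => (mem_sdiff.mp hx).2 (mem_insert_self a B'')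
        have haB' : a ∈ B' := mem_insert_self a B''
        have hB'R : B' ⊆ R := hB'A'.trans hA'R
        have hC'R : C' ⊆ R := sdiff_subset.trans hA'R
        refine le_trans (Nat.sInf_le ⟨B', C', hB'R, hC'R, ⟨a, haB'⟩, hC'ne,
          by omega, by omega, ?_, rfl⟩) ?_
        · rw [fitchOp_union B' C' (inter_sdiff_self B' A'), union_sdiff_of_subset hB'A']
        · have h1 : fCS a R k B' ≤ fCS a R k B :=
            ih B B' haB hBR haB' hB'R hB'card.symm hBc
          have h2 : fCS a R k C' = 0 :=
            fCS_of_notMem a R k C' haC' hC'ne hC'R (by omega)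
          omega
      rcases mem_union.mp (hop ▸ haA : a ∈ B ∪ C) with haB | haC
      · exact key B C hBR hCR hBne hCne hBc hCc hdisj hop haB
      · have := key C B hCR hBR hCne hBne hCc hBc (by rwa [inter_comm])
          (by rwa [union_comm]) haC
        omega

/-- Monotonicity under inclusion. -/
lemma fCS_mono (a : α) (R : Finset α) :
    ∀ (k : ℕ) (A A' : Finset α), a ∈ A → A ⊆ A' → A' ⊆ R → A'.card ≤ 2 ^ k →
    fCS a R k A' ≤ fCS a R k A := by
  intro k
  induction k with
  | zero => intro A A' h1 h2 _ _; simp [fCS_zero, h1, h2 h1]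
  | succ k ih =>
    intro A A' haA hAA' hA'R hA'card
    have hAR : A ⊆ R := hAA'.trans hA'R
    have haA' : a ∈ A' := hAA' haA
    have hAcard : A.card ≤ A'.card := card_le_card hAA'
    -- cardinality-based monotonicity at level k
    have cmono : ∀ B B' : Finset α, a ∈ B → B ⊆ R → a ∈ B' → B' ⊆ R →
        B.card ≤ B'.card → B'.card ≤ 2 ^ k → fCS a R k B' ≤ fCS a R k B := by
      intro B B' hB hBR hB' hB'R hcc hc2
      obtain ⟨Bt, hsub, hsubR, hcard⟩ :=
        exists_subsuperset_card_eq hBR hcc (card_le_card hB'R)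
      exact le_trans
        (fCS_sym a R k Bt B' (hsub hB) hsubR hB' hB'R hcard (hcard ▸ hc2))
        (ih B Bt hB hsub hsubR (hcard ▸ hc2))
    rw [fCS_succ a R k A, fCS_succ a R k A']
    obtain ⟨B, C, hBR, hCR, hBne, hCne, hBc, hCc, hop, hval⟩ :=
      Nat.sInf_mem (S_nonempty a R k A ⟨a, haA⟩ hAR (hAcard.trans hA'card))
    rw [hval]
    by_cases hint : (B ∩ C).Nonempty
    · -- intersection case
      rw [fitchOp_inter B C hint] at hop
      have hAB : A ⊆ B := by rw [← hop]; exact inter_subset_left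
      have hAC : A ⊆ C := by rw [← hop]; exact inter_subset_right
      by_cases h2 : A'.card ≤ 2 ^ k
      · -- realize A' as an intersection
        have hBsplit := card_inter_add_card_sdiff B A'
        have hCsplit := card_inter_add_card_sdiff C A'
        have hBi : (B ∩ A').card ≤ A'.card := card_le_card inter_subset_right
        have hCi : (C ∩ A').card ≤ A'.card := card_le_card inter_subset_right
        obtain ⟨B₁, hB₁sub, hB₁card⟩ := (B \ A').exists_subset_card_eq
          (n := min ((B \ A').card) (2 ^ k - A'.card)) (min_le_left _ _)
        obtain ⟨C₁, hC₁sub, hC₁card⟩ := (C \ A').exists_subset_card_eq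
          (n := min ((C \ A').card) (2 ^ k - A'.card)) (min_le_left _ _)
        set B' := A' ∪ B₁ with hB'def
        set C' := A' ∪ C₁ with hC'def
        have hdB : Disjoint A' B₁ :=
          disjoint_of_subset_right hB₁sub sdiff_disjoint.symm
        have hdC : Disjoint A' C₁ :=
          disjoint_of_subset_right hC₁sub sdiff_disjoint.symm
        have hB'card : B'.card = A'.card + B₁.card := card_union_of_disjoint hdB
        have hC'card : C'.card = A'.card + C₁.card := card_union_of_disjoint hdC
        have hdBC : Disjoint B₁ C₁ := by
          rw [disjoint_left]
          intro x hxB hxC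
          have hxB' := mem_sdiff.mp (hB₁sub hxB)
          have hxC' := mem_sdiff.mp (hC₁sub hxC)
          exact hxB'.2 (hAA' (by rw [← hop]; exact mem_inter.mpr ⟨hxB'.1, hxC'.1⟩))
        have hBC' : B' ∩ C' = A' := by
          ext x
          simp only [hB'def, hC'def, mem_inter, mem_union]
          constructor
          · rintro ⟨hb | hb, hc | hc⟩
            · exact hb
            · exact hb
            · exact hc
            · exact absurd hc (disjoint_left.mp hdBC hb)
          · intro h; exact ⟨Or.inl h, Or.inl h⟩
        have hB'R : B' ⊆ R := union_subset hA'R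
          ((hB₁sub.trans sdiff_subset).trans hBR)
        have hC'R : C' ⊆ R := union_subset hA'R
          ((hC₁sub.trans sdiff_subset).trans hCR)
        have haB' : a ∈ B' := mem_union_left _ haA'
        have haC' : a ∈ C' := mem_union_left _ haA'
        refine le_trans (Nat.sInf_le ⟨B', C', hB'R, hC'R, ⟨a, haB'⟩, ⟨a, haC'⟩,
          by omega, by omega, ?_, rfl⟩) ?_
        · rw [fitchOp_inter B' C' (by rw [hBC']; exact ⟨a, haA'⟩), hBC']
        · exact add_le_add
            (cmono B B' (hAB haA) hBR haB' hB'R (by omega) (by omega))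
            (cmono C C' (hAC haA) hCR haC' hC'R (by omega) (by omega))
      · -- A' too big for intersection: realize as a union
        push_neg at h2
        have hB''le : 2 ^ k - 1 ≤ (A'.erase a).card := by
          rw [card_erase_of_mem haA']; omega
        obtain ⟨B'', hB''sub, hB''card⟩ := (A'.erase a).exists_subset_card_eq hB''le
        have haB'' : a ∉ B'' := fun hx => (mem_erase.mp (hB''sub hx)).1 rfl
        set B' := insert a B'' with hB'def
        have hB'card : B'.card = 2 ^ k := by
          rw [hB'def, card_insert_of_notMem haB'', hB''card]
          have : 1 ≤ 2 ^ k := Nat.one_le_two_pow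
          omega
        have hB'A' : B' ⊆ A' := insert_subset haA' (hB''sub.trans (erase_subset _ _))
        set C' := A' \ B' with hC'def
        have hC'card : C'.card = A'.card - 2 ^ k := by
          rw [hC'def, card_sdiff_of_subset hB'A', hB'card]
        have hC'ne : C'.Nonempty := card_pos.mp (by omega)
        have haC' : a ∉ C' := fun hx => (mem_sdiff.mp hx).2 (mem_insert_self a B'')
        have haB' : a ∈ B' := mem_insert_self a B''
        have hB'R : B' ⊆ R := hB'A'.trans hA'R
        have hC'R : C' ⊆ R := sdiff_subset.trans hA'R
        rw [pow_succ] at hA'card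
        refine le_trans (Nat.sInf_le ⟨B', C', hB'R, hC'R, ⟨a, haB'⟩, hC'ne,
          by omega, by omega, ?_, rfl⟩) ?_
        · rw [fitchOp_union B' C' (inter_sdiff_self B' A'),
            union_sdiff_of_subset hB'A']
        · have h1 : fCS a R k B' ≤ fCS a R k B :=
            cmono B B' (hAB haA) hBR haB' hB'R (by omega) (by omega)
          have hz : fCS a R k C' = 0 :=
            fCS_of_notMem a R k C' haC' hC'ne hC'R (by omega)
          omega
    · -- union case
      have hdisj : B ∩ C = ∅ := not_nonempty_iff_eq_empty.mp hint
      rw [fitchOp_union B C hdisj] at hop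
      have key : ∀ B C : Finset α, B ⊆ R → C ⊆ R → B.Nonempty → C.Nonempty →
          B.card ≤ 2 ^ k → C.card ≤ 2 ^ k → B ∩ C = ∅ → B ∪ C = A → a ∈ B →
          sInf {n : ℕ | ∃ B C : Finset α, B ⊆ R ∧ C ⊆ R ∧
            B.Nonempty ∧ C.Nonempty ∧ B.card ≤ 2 ^ k ∧ C.card ≤ 2 ^ k ∧
            fitchOp B C = A' ∧ n = fCS a R k B + fCS a R k C} ≤
            fCS a R k B + fCS a R k C := by
        intro B C hBR hCR hBne hCne hBc hCc hdisj hop haB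
        have hcardA : A.card = B.card + C.card := by
          rw [← hop, card_union_of_disjoint (disjoint_iff_inter_eq_empty.mpr hdisj)]
        have hCpos : 1 ≤ C.card := card_pos.mpr hCne
        have hBA : B ⊆ A := hop ▸ subset_union_left
        have hBA' : B ⊆ A' := hBA.trans hAA'
        set m := min (2 ^ k) (A'.card - 1) with hm
        have hBm : B.card ≤ m := by omega
        obtain ⟨B', hBB', hB'A', hB'card⟩ :=
          exists_subsuperset_card_eq hBA' hBm (by omega)
        set C' := A' \ B' with hC'def
        have hC'card : C'.card = A'.card - m := by rw [hC'def, card_sdiff_of_subset hB'A', hB'card]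
        have hC'ne : C'.Nonempty := card_pos.mp (by omega)
        have haB' : a ∈ B' := hBB' haB
        have haC' : a ∉ C' := fun hx => (mem_sdiff.mp hx).2 haB'
        have hB'R : B' ⊆ R := hB'A'.trans hA'R
        have hC'R : C' ⊆ R := sdiff_subset.trans hA'R
        have hpow : 2 ^ (k+1) = 2 ^ k + 2 ^ k := by rw [pow_succ]; omega
        refine le_trans (Nat.sInf_le ⟨B', C', hB'R, hC'R, ⟨a, haB'⟩, hC'ne,
          by omega, by omega, ?_, rfl⟩) ?_
        · rw [fitchOp_union B' C' (inter_sdiff_self B' A'),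
            union_sdiff_of_subset hB'A']
        · have h1 : fCS a R k B' ≤ fCS a R k B :=
            ih B B' haB hBB' hB'R (by omega)
          have hz : fCS a R k C' = 0 :=
            fCS_of_notMem a R k C' haC' hC'ne hC'R (by omega)
          omega
      rcases mem_union.mp (hop ▸ haA : a ∈ B ∪ C) with haB | haC
      · exact key B C hBR hCR hBne hCne hBc hCc hdisj hop haB
      · have := key C B hCR hBR hCne hBne hCc hBc (by rwa [inter_comm])
          (by rwa [union_comm]) haC
        omega

/-- Cardinality-based monotonicity. -/
lemma fCS_card_mono (a : α) (R : Finset α) (k : ℕ) (B B' : Finset α)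
    (hB : a ∈ B) (hBR : B ⊆ R) (hB' : a ∈ B') (hB'R : B' ⊆ R)
    (hcc : B.card ≤ B'.card) (hc2 : B'.card ≤ 2 ^ k) :
    fCS a R k B' ≤ fCS a R k B := by
  obtain ⟨Bt, hsub, hsubR, hcard⟩ :=
    exists_subsuperset_card_eq hBR hcc (card_le_card hB'R)
  exact le_trans
    (fCS_sym a R k Bt B' (hsub hB) hsubR hB' hB'R hcard (hcard ▸ hc2))
    (fCS_mono a R k B Bt hB hsub hsubR (hcard ▸ hc2))

end Aux

/-- recursion for the full alphabet as target:
f_{k+1,r}^R = min { f_{k,r}^{A_{r-1}}, 2·f_{k,r}^R }. -/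
theorem stmt_8 {α : Type*} [DecidableEq α] (a : α) (R : Finset α)
    (hr : 2 ≤ R.card) (haR : a ∈ R) (k : ℕ)
    (Am : Finset α) (hAm : Am ⊆ R) (haAm : a ∈ Am) (hAmcard : Am.card = R.card - 1)
    (hdef : R.card ≤ 2 ^ k) :
    fCS a R (k + 1) R = min (fCS a R k Am) (2 * fCS a R k R) := by
  have hRne : R.Nonempty := ⟨a, haR⟩
  have hAmR : Am.card ≤ 2 ^ k := by omega
  rw [fCS_succ]
  apply le_antisymm
  · apply le_min
    · -- decomposition (Am, R \ Am)
      have hCcard : (R \ Am).card = 1 := by rw [card_sdiff_of_subset hAm]; omega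
      have hCne : (R \ Am).Nonempty := card_pos.mp (by omega)
      have haC : a ∉ R \ Am := fun hx => (mem_sdiff.mp hx).2 haAm
      refine Nat.sInf_le ⟨Am, R \ Am, hAm, sdiff_subset, ⟨a, haAm⟩, hCne,
        hAmR, by omega, ?_, ?_⟩
      · rw [fitchOp_union Am (R \ Am) (inter_sdiff_self Am R),
          union_sdiff_of_subset hAm]
      · rw [fCS_of_notMem a R k (R \ Am) haC hCne sdiff_subset (by omega)]
        omega
    · -- decomposition (R, R)
      refine Nat.sInf_le ⟨R, R, Subset.rfl, Subset.rfl, hRne, hRne, hdef, hdef,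
        fitchOp_self R hRne, by omega⟩
  · obtain ⟨B, C, hBR, hCR, hBne, hCne, hBc, hCc, hop, hval⟩ :=
      Nat.sInf_mem (S_nonempty a R k R hRne Subset.rfl (by rw [pow_succ]; omega))
    rw [hval]
    by_cases hint : (B ∩ C).Nonempty
    · -- B = C = R
      rw [fitchOp_inter B C hint] at hop
      have hBeq : B = R := subset_antisymm hBR (by rw [← hop]; exact inter_subset_left)
      have hCeq : C = R := subset_antisymm hCR (by rw [← hop]; exact inter_subset_right)
      rw [hBeq, hCeq]
      have := min_le_right (fCS a R k Am) (2 * fCS a R k R)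
      omega
    · have hdisj : B ∩ C = ∅ := not_nonempty_iff_eq_empty.mp hint
      rw [fitchOp_union B C hdisj] at hop
      have key : ∀ B C : Finset α, B ⊆ R → C ⊆ R → B.Nonempty → C.Nonempty →
          B.card ≤ 2 ^ k → C.card ≤ 2 ^ k → B ∩ C = ∅ → B ∪ C = R → a ∈ B →
          min (fCS a R k Am) (2 * fCS a R k R) ≤ fCS a R k B + fCS a R k C := by
        intro B C hBR hCR hBne hCne hBc hCc hdisj hop haB
        have hcardR : R.card = B.card + C.card := by
          rw [← hop, card_union_of_disjoint (disjoint_iff_inter_eq_empty.mpr hdisj)]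
        have hCpos : 1 ≤ C.card := card_pos.mpr hCne
        have h1 : fCS a R k Am ≤ fCS a R k B :=
          fCS_card_mono a R k B Am haB hBR haAm hAm (by omega) hAmR
        have := min_le_left (fCS a R k Am) (2 * fCS a R k R)
        omega
      rcases mem_union.mp (hop ▸ haR : a ∈ B ∪ C) with haB | haC
      · exact key B C hBR hCR hBne hCne hBc hCc hdisj hop haB
      · have := key C B hCR hBR hCne hBne hCc hBc (by rwa [inter_comm])
          (by rwa [union_comm]) haC
        omega
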